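/- arXiv:2409.02603 — 7 statements merged into one kernel-verified Lean document; each statement's English description precedes it below -/
import Mathlib

section
/- For a polynomial functor given by shapes S and positions P : S → Type, the M-type M S P together with its destructor dest : M S P → Σ s : S, (P s → M S P) is a terminal coalgebra: for every type X and map β : X → Σ s : S, (P s → X) there exists a unique function f : X → M S P such that dest (f x) = (fst (β x), f ∘ snd (β x)) for all x : X. -/
theorem m_terminal_coalgebra (S : Type) (P : S → Type) (X : Type)
    (β : X → Σ s : S, P s → X) :
    ∃! f : X → PFunctor.M ⟨S, P⟩, ∀ x : X,
      PFunctor.M.dest (f x) = ⟨(β x).1, f ∘ (β x).2⟩ :=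
  ⟨PFunctor.M.corec β, PFunctor.M.dest_corec (P := ⟨S, P⟩) β,
    fun f hf => PFunctor.M.corec_unique (P := ⟨S, P⟩) β f hf⟩
end

section
/- For types A, B, C there is an equivalence ((A ⊕ B) → C) ≃ (A → C) × (B → C), and consequently for families the container-functor reshaping: Σ s : S, ((∀ i, P i s → X i) × Σ f : Q s → C, ∀ q, ∀ i, B i (f q) → X i) ≃ Σ p : (Σ s : S, (Q s → C)), ∀ i, (P i p.1 ⊕ Σ q : Q p.1, B i (p.2 q)) → X i. -/
theorem container_reshaping (A B C : Type) (I S C' : Type)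
    (P : I → S → Type) (Q : S → Type) (Bf : I → C' → Type) (X : I → Type) :
    Nonempty (((A ⊕ B) → C) ≃ (A → C) × (B → C)) ∧
    Nonempty ((Σ s : S, (∀ i : I, P i s → X i) ×
        Σ f : Q s → C', ∀ q : Q s, ∀ i : I, Bf i (f q) → X i) ≃
      Σ p : Σ s : S, (Q s → C'),
        ∀ i : I, (P i p.1 ⊕ Σ q : Q p.1, Bf i (p.2 q)) → X i) := by
  refine ⟨⟨Equiv.sumArrowEquivProdArrow A B C⟩, ⟨?_⟩⟩
  exact
  { toFun := fun ⟨s, g, f, h⟩ => ⟨⟨s, f⟩, fun i x =>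
      match x with
      | Sum.inl p => g i p
      | Sum.inr ⟨q, b⟩ => h q i b⟩
    invFun := fun ⟨⟨s, f⟩, k⟩ =>
      ⟨s, fun i p => k i (Sum.inl p), f, fun q i b => k i (Sum.inr ⟨q, b⟩)⟩
    left_inv := fun ⟨s, g, f, h⟩ => rfl
    right_inv := fun ⟨⟨s, f⟩, k⟩ => by
      refine Sigma.ext rfl ?_
      simp only [heq_eq_eq]
      funext i x
      cases x with
      | inl p => rfl
      | inr qb => rfl }
end

section
/- Define the positions family Pos : W S Q → Type for a two-variable container (S, P, Q) inductively by: Pos (sup s f) is generated by here (p : P s) and below (q : Q s) (t : Pos (f q)). Then for every family X, the extension Σ w : W S Q, (Pos w → X) carries an algebra structure 'into' for the functor Y ↦ Σ s : S, ((P s → X) × (Q s → Y)), and this algebra is initial: for every algebra (Y, α) there is a unique map ᾱ : (Σ w, (Pos w → X)) → Y commuting with the algebra structures. -/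
/-- Finite paths in a `W`-tree ending at a parameter position. -/
inductive CWPos (S : Type) (P Q : S → Type) : WType Q → Type
  | here : ∀ {s : S} {f : Q s → WType Q}, P s → CWPos S P Q (WType.mk s f)
  | step : ∀ {s : S} {f : Q s → WType Q} (q : Q s),
      CWPos S P Q (f q) → CWPos S P Q (WType.mk s f)

/-- The canonical algebra structure on `Σ w : W S Q, (CWPos w → X)` for the
functor `Y ↦ Σ s : S, ((P s → X) × (Q s → Y))`. -/
def into (S : Type) (P Q : S → Type) (X : Type)
    (a : Σ s : S, (P s → X) × (Q s → Σ w : WType Q, CWPos S P Q w → X)) :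
    Σ w : WType Q, CWPos S P Q w → X :=
  ⟨WType.mk a.1 (fun q => (a.2.2 q).1), fun pos =>
    match pos with
    | .here p => a.2.1 p
    | .step q t => (a.2.2 q).2 t⟩

def cfold (S : Type) (P Q : S → Type) (X Y : Type)
    (α : (Σ s : S, (P s → X) × (Q s → Y)) → Y) :
    (w : WType Q) → (CWPos S P Q w → X) → Y
  | WType.mk s f, h =>
      α ⟨s, fun p => h (.here p), fun q => cfold S P Q X Y α (f q) (fun t => h (.step q t))⟩

theorem container_preserves_initial_algebra (S : Type) (P Q : S → Type) (X : Type)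
    (Y : Type) (α : (Σ s : S, (P s → X) × (Q s → Y)) → Y) :
    ∃! f : (Σ w : WType Q, CWPos S P Q w → X) → Y,
      f ∘ into S P Q X =
        α ∘ (fun a : Σ s : S, (P s → X) × (Q s → Σ w : WType Q, CWPos S P Q w → X) =>
          ⟨a.1, a.2.1, f ∘ a.2.2⟩) := by
  refine ⟨fun x => cfold S P Q X Y α x.1 x.2, ?_, ?_⟩
  · funext a
    obtain ⟨s, hx, g⟩ := a
    simp only [Function.comp, into, cfold]
    rfl
  · intro f' hf'
    funext x
    obtain ⟨w, h⟩ := x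
    induction w with
    | mk s f ih =>
      have key : (⟨WType.mk s f, h⟩ : Σ w : WType Q, CWPos S P Q w → X)
          = into S P Q X ⟨s, fun p => h (.here p), fun q => ⟨f q, fun t => h (.step q t)⟩⟩ := by
        simp only [into]
        congr 1
        funext pos
        cases pos <;> rfl
      rw [key]
      have := congrFun hf' ⟨s, fun p => h (.here p), fun q => ⟨f q, fun t => h (.step q t)⟩⟩
      simp only [Function.comp] at this ⊢
      rw [this]
      simp only [into, cfold]
      have : (f' ∘ fun q => (⟨f q, fun t => h (.step q t)⟩ : Σ w, CWPos S P Q w → X))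
          = fun q => cfold S P Q X Y α (f q) (fun t => h (.step q t)) :=
        funext fun q => ih q _
      rw [this]
end

section
/- With Pos defined over the M-type M S Q by the same inductive clauses (here at the root's P-positions, below following one step of the destructor), the extension Σ m : M S Q, (Pos m → X) carries a coalgebra structure 'out' for the functor Y ↦ Σ s : S, ((P s → X) × (Q s → Y)), and this coalgebra is terminal: for every coalgebra (Y, β) there is a unique map β̄ : Y → Σ m, (Pos m → X) commuting with the coalgebra structures. -/
/-- Finite paths in an `M`-tree ending at a parameter position. -/
inductive MPos (S : Type) (P Q : S → Type) : PFunctor.M ⟨S, Q⟩ → Type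
  | here : ∀ {m : PFunctor.M ⟨S, Q⟩}, P (PFunctor.M.dest m).1 → MPos S P Q m
  | step : ∀ {m : PFunctor.M ⟨S, Q⟩} (q : Q (PFunctor.M.dest m).1),
      MPos S P Q ((PFunctor.M.dest m).2 q) → MPos S P Q m

/-- The canonical coalgebra structure on `Σ m : M S Q, (MPos m → X)` for the
functor `Y ↦ Σ s : S, ((P s → X) × (Q s → Y))`. -/
def out (S : Type) (P Q : S → Type) (X : Type)
    (a : Σ m : PFunctor.M ⟨S, Q⟩, MPos S P Q m → X) :
    Σ s : S, (P s → X) × (Q s → Σ m : PFunctor.M ⟨S, Q⟩, MPos S P Q m → X) :=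
  ⟨(PFunctor.M.dest a.1).1, fun p => a.2 (.here p),
    fun q => ⟨(PFunctor.M.dest a.1).2 q, fun t => a.2 (.step q t)⟩⟩

/-!
The shape tree of the unique morphism is the corecursive unfolding in `M S Q` of the shapes produced
by `β`; its labels are read off by recursion on positions, following `β` down the path. Uniqueness
comes from a bisimulation principle for `out`: bisimilar elements have equal trees by the
coinduction principle of `M S Q`, and then equal labels by induction on positions.
-/

abbrev MExt (S : Type) (P Q : S → Type) (X : Type) : Type :=
  Σ m : PFunctor.M ⟨S, Q⟩, MPos S P Q m → X

namespace MExt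

variable {S : Type} {P Q : S → Type} {X Y : Type}

section Bisimulation

theorem dest_eq_of_out_eq {a : MExt S P Q X} {s : S} {x : P s → X} {k : Q s → MExt S P Q X}
    (h : out S P Q X a = ⟨s, x, k⟩) : PFunctor.M.dest a.1 = ⟨s, fun q => (k q).1⟩ :=
  congrArg (fun o : Σ s : S, (P s → X) × (Q s → MExt S P Q X) =>
    (⟨o.1, fun q => (o.2.2 q).1⟩ : Σ s, Q s → PFunctor.M ⟨S, Q⟩)) h

theorem out_eq_mk_iff {m : PFunctor.M ⟨S, Q⟩} {φ : MPos S P Q m → X}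
    {x : P (PFunctor.M.dest m).1 → X} {k : Q (PFunctor.M.dest m).1 → MExt S P Q X} :
    out S P Q X ⟨m, φ⟩ = ⟨(PFunctor.M.dest m).1, x, k⟩ ↔
      (fun p => φ (.here p)) = x ∧
        (fun q => ⟨(PFunctor.M.dest m).2 q, fun t => φ (.step q t)⟩) = k := by
  simp [out]

variable (R : MExt S P Q X → MExt S P Q X → Prop)
  (hR : ∀ a b, R a b → ∃ s x k k', out S P Q X a = ⟨s, x, k⟩ ∧ out S P Q X b = ⟨s, x, k'⟩ ∧
    ∀ q, R (k q) (k' q))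
include hR

theorem fst_eq_of_out_bisim (a b : MExt S P Q X) (h : R a b) : a.1 = b.1 := by
  refine PFunctor.M.bisim (fun m m' => ∃ a b, R a b ∧ a.1 = m ∧ b.1 = m') ?_ _ _ ⟨a, b, h, rfl, rfl⟩
  rintro _ _ ⟨a, b, hab, rfl, rfl⟩
  obtain ⟨s, x, k, k', ha, hb, hk⟩ := hR a b hab
  exact ⟨s, _, _, dest_eq_of_out_eq ha, dest_eq_of_out_eq hb, fun q => ⟨k q, k' q, hk q, rfl, rfl⟩⟩

theorem snd_eq_of_out_bisim {m : PFunctor.M ⟨S, Q⟩} (t : MPos S P Q m) :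
    ∀ φ ψ : MPos S P Q m → X, R ⟨m, φ⟩ ⟨m, ψ⟩ → φ t = ψ t := by
  induction t with
  | @here m p =>
    intro φ ψ h
    obtain ⟨s, x, k, k', hφ, hψ, -⟩ := hR _ _ h
    obtain rfl : (PFunctor.M.dest m).1 = s := congrArg Sigma.fst hφ
    exact congrFun ((out_eq_mk_iff.1 hφ).1.trans (out_eq_mk_iff.1 hψ).1.symm) p
  | @step m q t ih =>
    intro φ ψ h
    obtain ⟨s, x, k, k', hφ, hψ, hk⟩ := hR _ _ h
    obtain rfl : (PFunctor.M.dest m).1 = s := congrArg Sigma.fst hφ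
    rw [← (out_eq_mk_iff.1 hφ).2, ← (out_eq_mk_iff.1 hψ).2] at hk
    exact ih _ _ (hk q)

theorem eq_of_out_bisim (a b : MExt S P Q X) (h : R a b) : a = b := by
  obtain ⟨m, φ⟩ := a
  obtain ⟨m', ψ⟩ := b
  obtain rfl : m = m' := fst_eq_of_out_bisim R hR _ _ h
  exact congrArg (Sigma.mk m) (funext fun t => snd_eq_of_out_bisim R hR t φ ψ h)

end Bisimulation

variable (β : Y → Σ s : S, (P s → X) × (Q s → Y))

def IsCoalgebraHom (f : Y → MExt S P Q X) : Prop :=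
  out S P Q X ∘ f = (fun a : Σ s : S, (P s → X) × (Q s → Y) => ⟨a.1, a.2.1, f ∘ a.2.2⟩) ∘ β

theorem IsCoalgebraHom.unique {f g : Y → MExt S P Q X} (hf : IsCoalgebraHom β f)
    (hg : IsCoalgebraHom β g) : f = g :=
  funext fun y => eq_of_out_bisim (fun a b => ∃ y, a = f y ∧ b = g y)
    (by
      rintro _ _ ⟨y, rfl, rfl⟩
      exact ⟨(β y).1, (β y).2.1, _, _, congrFun hf y, congrFun hg y,
        fun q => ⟨(β y).2.2 q, rfl, rfl⟩⟩)
    _ _ ⟨y, rfl, rfl⟩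

/- `M.dest (M.corec g y)` reduces definitionally to `⟨(g y).1, M.corec g ∘ (g y).2⟩`: this is what
lets the `rfl` patterns of `corecLabel` typecheck and makes `isCoalgebraHom_corec` hold by `rfl`. -/

def corecShape (y : Y) : PFunctor.M ⟨S, Q⟩ :=
  PFunctor.M.corec (fun y => ⟨(β y).1, (β y).2.2⟩) y

def corecLabel : ∀ (y : Y) {m : PFunctor.M ⟨S, Q⟩}, corecShape β y = m → MPos S P Q m → X
  | y, _, rfl, .here p => (β y).2.1 p
  | y, _, rfl, .step q t => corecLabel ((β y).2.2 q) rfl t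

def corec (y : Y) : MExt S P Q X :=
  ⟨corecShape β y, corecLabel β y rfl⟩

theorem isCoalgebraHom_corec : IsCoalgebraHom β (corec β) :=
  rfl

end MExt

theorem container_preserves_terminal_coalgebra (S : Type) (P Q : S → Type) (X : Type)
    (Y : Type) (β : Y → Σ s : S, (P s → X) × (Q s → Y)) :
    ∃! f : Y → Σ m : PFunctor.M ⟨S, Q⟩, MPos S P Q m → X,
      out S P Q X ∘ f =
        (fun a : Σ s : S, (P s → X) × (Q s → Y) => ⟨a.1, a.2.1, f ∘ a.2.2⟩) ∘ β :=
  ⟨MExt.corec β, MExt.isCoalgebraHom_corec β,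
    fun _ hf => MExt.IsCoalgebraHom.unique β hf (MExt.isCoalgebraHom_corec β)⟩
end

section
/- Generalised Pos induction: let χ : (Σ s : S, (Q s → C)) ≃ C be a fixed-point structure with inverse ξ, and Pos : C → Type the associated inductive family of finite paths (generated by here : P (ξ₀ c) → Pos c and below : (q : Q (ξ₀ c)) → Pos (ξ₁ c q) → Pos c). Suppose f : D → C admits for every d : D a lift f̂_d : Q (ξ₀ (f d)) → D with f ∘ f̂_d = ξ₁ (f d) (a 'retraction up to one unfolding'). Then for any family A : (d : D) → Pos (f d) → Type equipped with h : ∀ d p, A d (here p) and b : ∀ d q t, A (f̂_d q) (cast t) → A d (below q t), there is a dependent function ∀ d (p : Pos (f d)), A d p. -/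
/-- Finite paths over the carrier `C` of a fixed point, relative to an
unfolding map `ξ : C → Σ s : S, (Q s → C)`. -/
inductive FixPos (S C : Type) (P Q : S → Type) (ξ : C → Σ s : S, Q s → C) : C → Type
  | here : ∀ {c : C}, P (ξ c).1 → FixPos S C P Q ξ c
  | step : ∀ {c : C} (q : Q (ξ c).1),
      FixPos S C P Q ξ ((ξ c).2 q) → FixPos S C P Q ξ c

theorem generalised_pos_induction (S C : Type) (P Q : S → Type)
    (χ : (Σ s : S, Q s → C) ≃ C)
    (ξ : C → Σ s : S, Q s → C) (hξ : ∀ c, ξ c = χ.symm c)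
    (D : Type) (f : D → C)
    (fhat : ∀ d : D, Q (ξ (f d)).1 → D)
    (hlift : ∀ (d : D) (q : Q (ξ (f d)).1), f (fhat d q) = (ξ (f d)).2 q)
    (A : ∀ d : D, FixPos S C P Q ξ (f d) → Type)
    (h : ∀ (d : D) (p : P (ξ (f d)).1), A d (.here p))
    (b : ∀ (d : D) (q : Q (ξ (f d)).1) (t : FixPos S C P Q ξ ((ξ (f d)).2 q)),
      A (fhat d q) (cast (congrArg (FixPos S C P Q ξ) (hlift d q)).symm t) →
      A d (.step q t)) :
    Nonempty (∀ (d : D) (p : FixPos S C P Q ξ (f d)), A d p) := by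
  have key : ∀ (c : C) (p : FixPos S C P Q ξ c) (d : D) (e : f d = c),
      A d (cast (congrArg (FixPos S C P Q ξ) e).symm p) := by
    intro c p
    induction p with
    | here pp => intro d e; subst e; exact h d pp
    | step q t ih => intro d e; subst e; exact b d q t (ih (fhat d q) (hlift d q))
  exact ⟨fun d p => key (f d) p d rfl⟩
end

section
/- Uniqueness of container coalgebra morphisms into the candidate terminal coalgebra: with out : (Σ m : M S Q, (Pos m → X)) → Σ s, ((P s → X) × (Q s → Σ m, (Pos m → X))) the canonical coalgebra, if β̃ : Y → Σ m, (Pos m → X) and β̄ : Y → Σ m, (Pos m → X) both make the coalgebra square with a given β : Y → Σ s, ((P s → X) × (Q s → Y)) commute, then β̃ = β̄. -/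
section Aux

variable {S : Type} {P Q : S → Type} {X Y : Type}

lemma comp_p {Z : Type} {a b : Σ s : S, (P s → X) × (Q s → Z)} (h : a = b) (p : P a.1) :
    a.2.1 p = b.2.1 (cast (congrArg P (congrArg Sigma.fst h)) p) := by subst h; rfl

lemma comp_q {Z : Type} {a b : Σ s : S, (P s → X) × (Q s → Z)} (h : a = b) (q : Q a.1) :
    a.2.2 q = b.2.2 (cast (congrArg Q (congrArg Sigma.fst h)) q) := by subst h; rfl

lemma dest_snd_cast {m₁ m₂ : PFunctor.M ⟨S, Q⟩} (h : m₁ = m₂) (q : Q (PFunctor.M.dest m₁).1) :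
    (PFunctor.M.dest m₂).2 (cast (congrArg (fun m => Q (PFunctor.M.dest m).1) h) q)
      = (PFunctor.M.dest m₁).2 q := by subst h; rfl

lemma cast_here {m₁ m₂ : PFunctor.M ⟨S, Q⟩} (h : m₁ = m₂) (p : P (PFunctor.M.dest m₁).1) :
    cast (congrArg (MPos S P Q) h) (MPos.here p) =
      MPos.here (cast (congrArg (fun m => P (PFunctor.M.dest m).1) h) p) := by subst h; rfl

lemma cast_step {m₁ m₂ : PFunctor.M ⟨S, Q⟩} (h : m₁ = m₂) (q : Q (PFunctor.M.dest m₁).1)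
    (pos : MPos S P Q ((PFunctor.M.dest m₁).2 q)) :
    cast (congrArg (MPos S P Q) h) (MPos.step q pos) =
      MPos.step (cast (congrArg (fun m => Q (PFunctor.M.dest m).1) h) q)
        (cast (congrArg (MPos S P Q) (dest_snd_cast h q).symm) pos) := by subst h; rfl

lemma heq_app {A B Z : Type} (h : A = B) {f : A → Z} {g : B → Z} (hfg : HEq f g) (a : A) :
    f a = g (cast h a) := by subst h; exact congrFun (eq_of_heq hfg) a

lemma fun_heq {A B Z : Type} (h : A = B) {f : A → Z} {g : B → Z}
    (H : ∀ a, f a = g (cast h a)) : HEq f g := by subst h; exact heq_of_eq (funext H)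

lemma snd_heq {α : Type} {γ : α → Type} {a b : Σ x : α, γ x} (h : a = b) : HEq a.2 b.2 := by
  subst h; rfl

variable (β : Y → Σ s : S, (P s → X) × (Q s → Y))
  (βt βb : Y → Σ m : PFunctor.M ⟨S, Q⟩, MPos S P Q m → X)
  (ht : out S P Q X ∘ βt =
    (fun a : Σ s : S, (P s → X) × (Q s → Y) => ⟨a.1, a.2.1, βt ∘ a.2.2⟩) ∘ β)
  (hb : out S P Q X ∘ βb =
    (fun a : Σ s : S, (P s → X) × (Q s → Y) => ⟨a.1, a.2.1, βb ∘ a.2.2⟩) ∘ β)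

include ht hb in
lemma aux_snd : ∀ {m : PFunctor.M ⟨S, Q⟩} (pos : MPos S P Q m) (y : Y)
    (h1 : (βt y).1 = m) (h2 : (βb y).1 = m),
    (βt y).2 (cast (congrArg (MPos S P Q) h1.symm) pos)
      = (βb y).2 (cast (congrArg (MPos S P Q) h2.symm) pos) := by
  intro m pos
  induction pos with
  | @here m p =>
    intro y h1 h2
    subst h1
    have et : out S P Q X (βt y) = ⟨(β y).1, (β y).2.1, βt ∘ (β y).2.2⟩ := congrFun ht y
    have eb : out S P Q X (βb y) = ⟨(β y).1, (β y).2.1, βb ∘ (β y).2.2⟩ := congrFun hb y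
    have etf : (PFunctor.M.dest (βt y).1).1 = (β y).1 := congrArg Sigma.fst et
    have ebf : (PFunctor.M.dest (βb y).1).1 = (β y).1 := congrArg Sigma.fst eb
    have L : (βt y).2 (MPos.here p) = (β y).2.1 (cast (congrArg P etf) p) := comp_p et p
    have R : (βb y).2
          (MPos.here (cast (congrArg (fun m => P (PFunctor.M.dest m).1) h2.symm) p))
        = (β y).2.1 (cast (congrArg P ebf)
            (cast (congrArg (fun m => P (PFunctor.M.dest m).1) h2.symm) p)) :=
      comp_p eb _
    show (βt y).2 (MPos.here p)
      = (βb y).2 (cast (congrArg (MPos S P Q) h2.symm) (MPos.here p))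
    rw [cast_here h2.symm, L, R, cast_cast]
  | @step m q pos ih =>
    intro y h1 h2
    subst h1
    have et : out S P Q X (βt y) = ⟨(β y).1, (β y).2.1, βt ∘ (β y).2.2⟩ := congrFun ht y
    have eb : out S P Q X (βb y) = ⟨(β y).1, (β y).2.1, βb ∘ (β y).2.2⟩ := congrFun hb y
    have etf : (PFunctor.M.dest (βt y).1).1 = (β y).1 := congrArg Sigma.fst et
    have ebf : (PFunctor.M.dest (βb y).1).1 = (β y).1 := congrArg Sigma.fst eb
    have st : (⟨(PFunctor.M.dest (βt y).1).2 q, fun t => (βt y).2 (MPos.step q t)⟩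
          : Σ m : PFunctor.M ⟨S, Q⟩, MPos S P Q m → X)
        = βt ((β y).2.2 (cast (congrArg Q etf) q)) := comp_q et q
    have bt : (⟨(PFunctor.M.dest (βb y).1).2
            (cast (congrArg (fun m => Q (PFunctor.M.dest m).1) h2.symm) q),
          fun t => (βb y).2 (MPos.step
            (cast (congrArg (fun m => Q (PFunctor.M.dest m).1) h2.symm) q) t)⟩
          : Σ m : PFunctor.M ⟨S, Q⟩, MPos S P Q m → X)
        = βb ((β y).2.2 (cast (congrArg Q ebf)
            (cast (congrArg (fun m => Q (PFunctor.M.dest m).1) h2.symm) q))) := comp_q eb _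
    have hy : (β y).2.2 (cast (congrArg Q ebf)
          (cast (congrArg (fun m => Q (PFunctor.M.dest m).1) h2.symm) q))
        = (β y).2.2 (cast (congrArg Q etf) q) := by
      rw [cast_cast]
    rw [hy] at bt
    have f1' : (PFunctor.M.dest (βt y).1).2 q
        = (βt ((β y).2.2 (cast (congrArg Q etf) q))).1 := congrArg Sigma.fst st
    have f2' : (PFunctor.M.dest (βb y).1).2
          (cast (congrArg (fun m => Q (PFunctor.M.dest m).1) h2.symm) q)
        = (βb ((β y).2.2 (cast (congrArg Q etf) q))).1 := congrArg Sigma.fst bt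
    have f2 : (βb ((β y).2.2 (cast (congrArg Q etf) q))).1
        = (PFunctor.M.dest (βt y).1).2 q := f2'.symm.trans (dest_snd_cast h2.symm q)
    have LH : (βt y).2 (MPos.step q pos)
        = (βt ((β y).2.2 (cast (congrArg Q etf) q))).2
            (cast (congrArg (MPos S P Q) f1') pos) :=
      heq_app (congrArg (MPos S P Q) f1') (snd_heq st) pos
    have RH : (βb y).2 (MPos.step
          (cast (congrArg (fun m => Q (PFunctor.M.dest m).1) h2.symm) q)
          (cast (congrArg (MPos S P Q) (dest_snd_cast h2.symm q).symm) pos))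
        = (βb ((β y).2.2 (cast (congrArg Q etf) q))).2
            (cast (congrArg (MPos S P Q) f2')
              (cast (congrArg (MPos S P Q) (dest_snd_cast h2.symm q).symm) pos)) :=
      heq_app (congrArg (MPos S P Q) f2') (snd_heq bt) _
    have hc : cast (congrArg (MPos S P Q) f2')
          (cast (congrArg (MPos S P Q) (dest_snd_cast h2.symm q).symm) pos)
        = cast (congrArg (MPos S P Q) f2.symm) pos := by rw [cast_cast]
    show (βt y).2 (MPos.step q pos)
      = (βb y).2 (cast (congrArg (MPos S P Q) h2.symm) (MPos.step q pos))
    rw [cast_step h2.symm]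
    exact LH.trans ((ih ((β y).2.2 (cast (congrArg Q etf) q)) f1'.symm f2).trans
      ((congrArg ((βb ((β y).2.2 (cast (congrArg Q etf) q))).2) hc).symm.trans RH.symm))

include ht hb in
lemma aux_fst : ∀ y : Y, (βt y).1 = (βb y).1 := by
  intro y
  apply PFunctor.M.bisim (fun x₁ x₂ => ∃ z : Y, x₁ = (βt z).1 ∧ x₂ = (βb z).1)
  · rintro x₁ x₂ ⟨z, rfl, rfl⟩
    have et : out S P Q X (βt z) = ⟨(β z).1, (β z).2.1, βt ∘ (β z).2.2⟩ := congrFun ht z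
    have eb : out S P Q X (βb z) = ⟨(β z).1, (β z).2.1, βb ∘ (β z).2.2⟩ := congrFun hb z
    refine ⟨(β z).1, fun q => (βt ((β z).2.2 q)).1, fun q => (βb ((β z).2.2 q)).1, ?_, ?_, ?_⟩
    · exact congrArg (fun a : Σ s : S, (P s → X) ×
        (Q s → Σ m : PFunctor.M ⟨S, Q⟩, MPos S P Q m → X) =>
          (⟨a.1, fun q => (a.2.2 q).1⟩ : (⟨S, Q⟩ : PFunctor).Obj (PFunctor.M ⟨S, Q⟩))) et
    · exact congrArg (fun a : Σ s : S, (P s → X) ×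
        (Q s → Σ m : PFunctor.M ⟨S, Q⟩, MPos S P Q m → X) =>
          (⟨a.1, fun q => (a.2.2 q).1⟩ : (⟨S, Q⟩ : PFunctor).Obj (PFunctor.M ⟨S, Q⟩))) eb
    · exact fun q => ⟨(β z).2.2 q, rfl, rfl⟩
  · exact ⟨y, rfl, rfl⟩

end Aux

theorem coalgebra_morphism_unique (S : Type) (P Q : S → Type) (X Y : Type)
    (β : Y → Σ s : S, (P s → X) × (Q s → Y))
    (βt βb : Y → Σ m : PFunctor.M ⟨S, Q⟩, MPos S P Q m → X)
    (ht : out S P Q X ∘ βt =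
      (fun a : Σ s : S, (P s → X) × (Q s → Y) => ⟨a.1, a.2.1, βt ∘ a.2.2⟩) ∘ β)
    (hb : out S P Q X ∘ βb =
      (fun a : Σ s : S, (P s → X) × (Q s → Y) => ⟨a.1, a.2.1, βb ∘ a.2.2⟩) ∘ β) :
    βt = βb := by
  funext y
  have h1 : (βt y).1 = (βb y).1 := aux_fst β βt βb ht hb y
  refine Sigma.ext h1 ?_
  exact fun_heq (congrArg (MPos S P Q) h1)
    (fun pos => aux_snd β βt βb ht hb pos y rfl h1.symm)
end

section
/- The list container example of the main theorems: for a fixed type X, the functor Y ↦ Unit ⊕ (X × Y) has an initial algebra with carrier equivalent to Σ n : ℕ, (Fin n → X) (i.e. List X), and a terminal coalgebra with carrier equivalent to Σ n : ℕ∞, (Cofin n → X), where Cofin n is the type of indices below n (finite for finite n, all of ℕ for n = ∞). -/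
/-!
`List X` with `nil`/`cons` is the initial algebra: an algebra map out of it is forced by
structural recursion to be a `List.foldr`. Dually, `Stream'.Seq X` with `Seq.destruct` is the
terminal coalgebra: a coalgebra map into it is forced by bisimulation to be a `Seq.corec`.
The functor `Unit ⊕ X × ·` is `Option (X × ·)`, the shape of `Seq.destruct` and `Seq.corec`,
up to the natural isomorphism `Option α ≃ Unit ⊕ α`.
A sequence is determined by its `ℕ∞`-valued length and its entries below that length, which
gives the description `Σ n : ℕ∞, Cofin n → X`, just as `List.equivSigmaTuple` does for lists.
-/

/-- `Cofin n` : the type of indices below a conatural number `n`. -/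
def Cofin (n : ℕ∞) : Type := {k : ℕ // (k : ℕ∞) < n}

open Stream'

namespace Equiv

def optionEquivUnitSum (α : Type*) : Option α ≃ Unit ⊕ α :=
  (optionEquivSumPUnit α).trans (sumComm _ _)

variable {α β Y : Type*}

theorem optionEquivUnitSum_map (g : α → β) (o : Option α) :
    optionEquivUnitSum β (o.map g) = Sum.map id g (optionEquivUnitSum α o) := by
  cases o <;> rfl

theorem optionEquivUnitSum_comp_eq_iff (σ : Y → Option β) (γ : Y → Unit ⊕ α) (g : α → β) :
    optionEquivUnitSum β ∘ σ = Sum.map id g ∘ γ ↔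
      σ = Option.map g ∘ (optionEquivUnitSum α).symm ∘ γ := by
  have hγ : Sum.map id g ∘ γ =
      optionEquivUnitSum β ∘ Option.map g ∘ (optionEquivUnitSum α).symm ∘ γ := by
    funext y
    simp [optionEquivUnitSum_map]
  rw [hγ]
  exact (Equiv.injective _).comp_left.eq_iff

end Equiv

theorem Cofin.sigma_ext {X : Type*} {p q : Σ n : ℕ∞, Cofin n → X} (h : p.1 = q.1)
    (h' : ∀ (k : ℕ) (hp : (k : ℕ∞) < p.1) (hq : (k : ℕ∞) < q.1), p.2 ⟨k, hp⟩ = q.2 ⟨k, hq⟩) :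
    p = q := by
  obtain ⟨n, f⟩ := p
  obtain ⟨m, g⟩ := q
  subst h
  congr
  funext ⟨k, hk⟩
  exact h' k hk hk

namespace Stream'.Seq

variable {X Y : Type*}

theorem destruct_comp_eq_iff (β : Y → Option (X × Y)) (f : Y → Seq X) :
    destruct ∘ f = Option.map (Prod.map id f) ∘ β ↔ f = corec β := by
  constructor
  · intro hf
    funext y
    refine eq_of_bisim (fun s t => ∃ y, s = f y ∧ t = corec β y) ?_ ⟨y, rfl, rfl⟩
    rintro _ _ ⟨y, rfl, rfl⟩
    rw [show (f y).destruct = _ from congrFun hf y, Function.comp_apply, corec_eq]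
    rcases β y with _ | ⟨x, y'⟩
    · trivial
    · exact ⟨rfl, y', rfl, rfl⟩
  · rintro rfl
    funext y
    simp only [Function.comp_apply, corec_eq]
    rcases β y with _ | ⟨x, y'⟩ <;> rfl

def ofCofin (n : ℕ∞) (f : Cofin n → X) : Seq X :=
  ⟨fun k => if h : (k : ℕ∞) < n then some (f ⟨k, h⟩) else none, by
    intro k hk
    have hkn : ¬(k : ℕ∞) < n := by simpa using hk
    exact dif_neg fun h => hkn ((Nat.cast_lt.2 k.lt_succ_self).trans h)⟩

theorem get?_ofCofin (n : ℕ∞) (f : Cofin n → X) (k : ℕ) :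
    (ofCofin n f).get? k = if h : (k : ℕ∞) < n then some (f ⟨k, h⟩) else none :=
  rfl

theorem length'_ofCofin (n : ℕ∞) (f : Cofin n → X) : (ofCofin n f).length' = n := by
  refine eq_of_forall_lt_iff fun c => ?_
  induction c using ENat.recTopCoe with
  | top => simp
  | coe k =>
    rw [lt_length'_iff, get?_ofCofin]
    split <;> simp_all

noncomputable def equivSigmaCofin : Seq X ≃ Σ n : ℕ∞, Cofin n → X where
  toFun s := ⟨s.length', fun k =>
    (s.get? k.1).get (Option.isSome_iff_exists.2 (lt_length'_iff.1 k.2))⟩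
  invFun p := ofCofin p.1 p.2
  left_inv s := Seq.ext fun k => by
    rw [get?_ofCofin]
    split_ifs with h
    · simp
    · rw [lt_length'_iff, not_exists] at h
      exact (Option.eq_none_iff_forall_not_mem.2 h).symm
  right_inv := fun ⟨n, f⟩ =>
    Cofin.sigma_ext (length'_ofCofin n f) fun k _ hq => by simp [get?_ofCofin, hq]

end Stream'.Seq

namespace ListContainer

variable {X Y : Type*}

def listAlg : Unit ⊕ X × List X → List X :=
  Sum.elim (fun _ => []) (Function.uncurry List.cons)

theorem comp_listAlg_eq_iff (α : Unit ⊕ X × Y → Y) (f : List X → Y) :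
    f ∘ listAlg = α ∘ Sum.map id (Prod.map id f) ↔
      f = List.foldr (fun x y => α (.inr (x, y))) (α (.inl ())) := by
  constructor
  · intro hf
    funext l
    induction l with
    | nil => exact congrFun hf (.inl ())
    | cons x l ih => simpa [listAlg, ih] using congrFun hf (.inr (x, l))
  · rintro rfl
    funext x
    rcases x with _ | ⟨x, l⟩ <;> rfl

def seqCoalg : Seq X → Unit ⊕ X × Seq X :=
  Equiv.optionEquivUnitSum _ ∘ Seq.destruct

theorem seqCoalg_comp_eq_iff (β : Y → Unit ⊕ X × Y) (f : Y → Seq X) :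
    seqCoalg ∘ f = Sum.map id (Prod.map id f) ∘ β ↔
      f = Seq.corec ((Equiv.optionEquivUnitSum _).symm ∘ β) :=
  (Equiv.optionEquivUnitSum_comp_eq_iff (Seq.destruct ∘ f) β _).trans
    (Seq.destruct_comp_eq_iff _ f)

end ListContainer

open ListContainer in
theorem list_container_fixed_points (X : Type) :
    (∃ (I : Type) (ι : (Unit ⊕ X × I) → I),
      (∀ (Y : Type) (α : (Unit ⊕ X × Y) → Y),
        ∃! f : I → Y, f ∘ ι = α ∘ Sum.map id (Prod.map id f)) ∧
      Nonempty (I ≃ Σ n : ℕ, Fin n → X)) ∧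
    (∃ (T : Type) (τ : T → (Unit ⊕ X × T)),
      (∀ (Y : Type) (β : Y → (Unit ⊕ X × Y)),
        ∃! f : Y → T, τ ∘ f = Sum.map id (Prod.map id f) ∘ β) ∧
      Nonempty (T ≃ Σ n : ℕ∞, Cofin n → X)) :=
  ⟨⟨List X, listAlg,
      fun _ α => (existsUnique_congr (comp_listAlg_eq_iff α)).2 existsUnique_eq,
      ⟨List.equivSigmaTuple⟩⟩,
    ⟨Seq X, seqCoalg,
      fun _ β => (existsUnique_congr (seqCoalg_comp_eq_iff β)).2 existsUnique_eq,
      ⟨Seq.equivSigmaCofin⟩⟩⟩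
end
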